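/- arXiv:1310.4282 — 3 statements merged into one kernel-verified Lean document; each statement's English description precedes it below -/
import Mathlib

section
/- In the network of Example 3 — demand D = 2C at node 1, generators 1 and 4 at node 1 with marginal costs 1 and 2k, generators 2 and 3 at node 2 with marginal cost k, line capacity C, k > 1 — the efficient dispatch is x* = (2C, 0, 0, 0) with total cost 2C, while the dispatch x = (C, C, 0, 0) has total cost (1 + k)C; hence the ratio of costs is (k+1)/2, which tends to infinity as k → ∞. -/
lemma demand_le_dispatch_cost {k D x₁ x₂ x₃ x₄ : ℝ} (hk : 1 ≤ k)
    (hx₂ : 0 ≤ x₂) (hx₃ : 0 ≤ x₃) (hx₄ : 0 ≤ x₄) (hbal : x₁ + x₂ + x₃ + x₄ = D) :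
    D ≤ x₁ + k * x₂ + k * x₃ + 2 * k * x₄ := by
  have hexcess : 0 ≤ (k - 1) * (x₂ + x₃) + (2 * k - 1) * x₄ := by
    have : 0 ≤ 2 * k - 1 := by linarith
    positivity
  calc D = x₁ + x₂ + x₃ + x₄ := hbal.symm
    _ ≤ x₁ + x₂ + x₃ + x₄ + ((k - 1) * (x₂ + x₃) + (2 * k - 1) * x₄) := le_add_of_nonneg_right hexcess
    _ = x₁ + k * x₂ + k * x₃ + 2 * k * x₄ := by ring

/-- Example 3: cost computations underlying the unbounded price of anarchy. -/
theorem poa_example_costs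
    (k C : ℝ) (hk : 1 < k) (hC : 0 < C) :
    (∀ x₁ x₂ x₃ x₄ : ℝ, 0 ≤ x₁ → 0 ≤ x₂ → 0 ≤ x₃ → 0 ≤ x₄ →
        x₂ + x₃ ≤ C → x₁ + x₂ + x₃ + x₄ = 2 * C →
        2 * C ≤ x₁ + k * x₂ + k * x₃ + 2 * k * x₄) ∧
    (1 * (2 * C) + k * 0 + k * 0 + 2 * k * 0 = 2 * C) ∧
    (1 * C + k * C + k * 0 + 2 * k * 0 = (1 + k) * C) ∧
    ((1 + k) * C / (2 * C) = (k + 1) / 2) ∧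
    Filter.Tendsto (fun k' : ℝ => (k' + 1) / 2) Filter.atTop Filter.atTop := by
  refine ⟨?_, by ring, by ring, ?_, ?_⟩
  · intro x₁ x₂ x₃ x₄ _ hx₂ hx₃ hx₄ _ hbal
    exact demand_le_dispatch_cost hk.le hx₂ hx₃ hx₄ hbal
  · rw [mul_div_mul_right _ _ hC.ne', add_comm]
  · exact (Filter.tendsto_atTop_add_const_right _ 1 Filter.tendsto_id).atTop_div_const two_pos
end

section
/- Let P ⊆ ℝ^N_{≥0} be a nonempty convex set, c_n : ℝ_{≥0} → ℝ convex differentiable with c_n(0) = 0, and x* ∈ P minimizing ∑_n c_n(x_n) over P. Define bids b_n(x) = p_n x for x ≤ s_n and q_n x + (p_n − q_n)s_n for x > s_n with p_n = c_n'(x*_n), s_n = x*_n, and any q_n > p_n. Then x* minimizes ∑_n b_n(x_n) over P. -/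
/-!
Since `x*` minimises the differentiable function `x ↦ ∑ₙ cₙ(xₙ)` over the convex set `P`, its
derivative is nonnegative in every feasible direction: `∑ₙ pₙ (xₙ - x*ₙ) ≥ 0` for `x ∈ P`.
Each bid `bₙ` lies above the line `x ↦ pₙ x` (its second slope `qₙ` exceeds `pₙ`) and touches it
at `x*ₙ`, so `∑ₙ bₙ(x*ₙ) = ∑ₙ pₙ x*ₙ ≤ ∑ₙ pₙ xₙ ≤ ∑ₙ bₙ(xₙ)`.
-/

open Finset

theorem IsMinOn.sum_deriv_mul_sub_nonneg {ι : Type*} [Fintype ι] {P : Set (ι → ℝ)}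
    (hP : Convex ℝ P) {c : ι → ℝ → ℝ} {a : ι → ℝ} (hc : ∀ i, DifferentiableAt ℝ (c i) (a i))
    (ha : a ∈ P) (hmin : IsMinOn (fun x => ∑ i, c i (x i)) P a) {x : ι → ℝ} (hx : x ∈ P) :
    0 ≤ ∑ i, deriv (c i) (a i) * (x i - a i) := by
  have hderiv : HasFDerivAt (fun x : ι → ℝ => ∑ i, c i (x i))
      (∑ i, deriv (c i) (a i) • ContinuousLinearMap.proj i) a :=
    HasFDerivAt.fun_sum fun i _ =>
      (hc i).hasDerivAt.comp_hasFDerivAt a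
        (ContinuousLinearMap.proj (R := ℝ) (φ := fun _ : ι => ℝ) i).hasFDerivAt
  have hdir : x - a ∈ posTangentConeAt P a :=
    sub_mem_posTangentConeAt_of_segment_subset (hP.segment_subset ha hx)
  simpa using hmin.localize.hasFDerivWithinAt_nonneg hderiv.hasFDerivWithinAt hdir

theorem mul_le_ite_of_le {p q s x : ℝ} (hpq : p ≤ q) :
    p * x ≤ if x ≤ s then p * x else q * x + (p - q) * s := by
  split_ifs with hxs
  · exact le_rfl
  · nlinarith

theorem efficient_dispatch_optimal_for_bids_general
    {N : ℕ} (P : Set (Fin N → ℝ)) (hPconv : Convex ℝ P)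
    (c : Fin N → ℝ → ℝ)
    (hdiff : ∀ n, Differentiable ℝ (c n))
    (xstar : Fin N → ℝ) (hxstar : xstar ∈ P)
    (hmin : ∀ x ∈ P, ∑ n, c n (xstar n) ≤ ∑ n, c n (x n))
    (p s q : Fin N → ℝ)
    (hp : ∀ n, p n = deriv (c n) (xstar n))
    (hs : ∀ n, s n = xstar n)
    (hq : ∀ n, p n < q n)
    (b : Fin N → ℝ → ℝ)
    (hb : ∀ n x, b n x = if x ≤ s n then p n * x else q n * x + (p n - q n) * s n) :
    ∀ x ∈ P, ∑ n, b n (xstar n) ≤ ∑ n, b n (x n) := by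
  intro x hx
  have hfoc := IsMinOn.sum_deriv_mul_sub_nonneg hPconv (fun n => hdiff n _) hxstar
    (isMinOn_iff.mpr hmin) hx
  simp only [← hp, mul_sub, sum_sub_distrib, sub_nonneg] at hfoc
  calc ∑ n, b n (xstar n) = ∑ n, p n * xstar n := by simp [hb, hs]
    _ ≤ ∑ n, p n * x n := hfoc
    _ ≤ ∑ n, b n (x n) := sum_le_sum fun n _ => by rw [hb]; exact mul_le_ite_of_le (hq n).le

/-- The truthful-at-the-margin bid profile makes the efficient dispatch also optimal for
the reported bids. -/
theorem efficient_dispatch_optimal_for_bids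
    {N : ℕ} (P : Set (Fin N → ℝ)) (hPne : P.Nonempty) (hPconv : Convex ℝ P)
    (hPnonneg : ∀ x ∈ P, ∀ n, 0 ≤ x n)
    (c : Fin N → ℝ → ℝ)
    (hconv : ∀ n, ConvexOn ℝ (Set.Ici 0) (c n))
    (hdiff : ∀ n, Differentiable ℝ (c n))
    (hc0 : ∀ n, c n 0 = 0)
    (xstar : Fin N → ℝ) (hxstar : xstar ∈ P)
    (hmin : ∀ x ∈ P, ∑ n, c n (xstar n) ≤ ∑ n, c n (x n))
    (p s q : Fin N → ℝ)
    (hp : ∀ n, p n = deriv (c n) (xstar n))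
    (hs : ∀ n, s n = xstar n)
    (hq : ∀ n, p n < q n)
    (b : Fin N → ℝ → ℝ)
    (hb : ∀ n x, b n x = if x ≤ s n then p n * x else q n * x + (p n - q n) * s n) :
    ∀ x ∈ P, ∑ n, b n (xstar n) ≤ ∑ n, b n (x n) :=
  efficient_dispatch_optimal_for_bids_general P hPconv c hdiff xstar hxstar hmin p s q hp hs hq b hb
end

section
/- Under the PNSP mechanism with bid profile b_n specified by (p_n, s_n, q_n) where p_n = c_n'(x*_n), s_n = x*_n, q_n > p_n (with x* the efficient dispatch over a convex feasible set P), for every generator n₀ and every alternative dispatch x̃ ∈ P, the payoff change satisfies ∑_{n ≠ n₀} b_n(x*_n) − ∑_{n ≠ n₀} b_n(x̃_n) + c_{n₀}(x*_{n₀}) − c_{n₀}(x̃_{n₀}) ≤ 0. -/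
/-!
Every term of the payoff change is dominated by the linear term `p n * (x* n - x̃ n)`: for the
deviating generator by the gradient inequality of its convex cost, for the others because the
PNSP bid is linear with slope `p n` up to `s n = x* n` and steeper beyond. The sum of these linear
terms is `-∑ n, deriv (c n) (x* n) * (x̃ n - x* n)`, which is nonpositive by the first-order optimality
condition of the efficient dispatch `x*` over the convex set `P`.
-/

open Finset

lemma ConvexOn.deriv_mul_sub_le {S : Set ℝ} {f : ℝ → ℝ} (hf : ConvexOn ℝ S f) {x y : ℝ}
    (hx : x ∈ S) (hy : y ∈ S) (hd : DifferentiableAt ℝ f x) :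
    deriv f x * (y - x) ≤ f y - f x := by
  rcases lt_trichotomy x y with hxy | rfl | hyx
  · have := hf.deriv_le_slope hx hy hxy hd
    rwa [slope_def_field, le_div_iff₀ (sub_pos.mpr hxy)] at this
  · simp
  · have := hf.slope_le_deriv hy hx hyx hd
    rw [slope_def_field, div_le_iff₀ (sub_pos.mpr hyx)] at this
    linarith

lemma hasFDerivAt_sum_apply {ι : Type*} [Fintype ι] {c : ι → ℝ → ℝ} {x : ι → ℝ}
    (hc : ∀ i, DifferentiableAt ℝ (c i) (x i)) :
    HasFDerivAt (fun y : ι → ℝ => ∑ i, c i (y i))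
      (∑ i, deriv (c i) (x i) • ContinuousLinearMap.proj (R := ℝ) (φ := fun _ : ι => ℝ) i) x :=
  HasFDerivAt.fun_sum fun i _ =>
    (hc i).hasDerivAt.comp_hasFDerivAt (f := fun y : ι → ℝ => y i) x (hasFDerivAt_apply i x)

lemma sum_deriv_mul_sub_nonneg_of_isMinOn {ι : Type*} [Fintype ι] {P : Set (ι → ℝ)}
    (hP : Convex ℝ P) {c : ι → ℝ → ℝ} {x : ι → ℝ} (hx : x ∈ P)
    (hmin : IsMinOn (fun y : ι → ℝ => ∑ i, c i (y i)) P x)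
    (hc : ∀ i, DifferentiableAt ℝ (c i) (x i)) {y : ι → ℝ} (hy : y ∈ P) :
    0 ≤ ∑ i, deriv (c i) (x i) * (y i - x i) := by
  have := hmin.localize.hasFDerivWithinAt_nonneg (hasFDerivAt_sum_apply hc).hasFDerivWithinAt
    (sub_mem_posTangentConeAt_of_segment_subset (hP.segment_subset hx hy))
  simpa using this

noncomputable def pnspBid (p s q x : ℝ) : ℝ :=
  if x ≤ s then p * x else q * x + (p - q) * s

lemma pnspBid_sub_le {p s q : ℝ} (hpq : p ≤ q) (x : ℝ) :
    pnspBid p s q s - pnspBid p s q x ≤ p * (s - x) := by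
  unfold pnspBid
  rw [if_pos le_rfl]
  split_ifs with hx
  · linarith
  · nlinarith

theorem pnsp_deviation_inequality_general
    {N : ℕ} (P : Set (Fin N → ℝ)) (hPconv : Convex ℝ P)
    (hPnonneg : ∀ x ∈ P, ∀ n, 0 ≤ x n)
    (c : Fin N → ℝ → ℝ)
    (hconv : ∀ n, ConvexOn ℝ (Set.Ici 0) (c n))
    (hdiff : ∀ n, Differentiable ℝ (c n))
    (xstar : Fin N → ℝ) (hxstar : xstar ∈ P)
    (hmin : ∀ x ∈ P, ∑ n, c n (xstar n) ≤ ∑ n, c n (x n))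
    (p s q : Fin N → ℝ)
    (hp : ∀ n, p n = deriv (c n) (xstar n))
    (hs : ∀ n, s n = xstar n)
    (hq : ∀ n, p n < q n)
    (b : Fin N → ℝ → ℝ)
    (hb : ∀ n x, b n x = if x ≤ s n then p n * x else q n * x + (p n - q n) * s n) :
    ∀ n₀ : Fin N, ∀ xt ∈ P,
      (∑ n ∈ Finset.univ.erase n₀, b n (xstar n)) -
        (∑ n ∈ Finset.univ.erase n₀, b n (xt n)) +
        c n₀ (xstar n₀) - c n₀ (xt n₀) ≤ 0 := by
  intro n₀ xt hxt
  have hbid (n : Fin N) : b n (xstar n) - b n (xt n) ≤ p n * (xstar n - xt n) := by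
    rw [← hs n, hb, hb]
    exact pnspBid_sub_le (hq n).le (xt n)
  have hcost : c n₀ (xstar n₀) - c n₀ (xt n₀) ≤ p n₀ * (xstar n₀ - xt n₀) := by
    have := (hconv n₀).deriv_mul_sub_le (hPnonneg xstar hxstar n₀) (hPnonneg xt hxt n₀)
      (hdiff n₀ _)
    rw [hp]
    linarith
  have hfoc : 0 ≤ ∑ n, p n * (xt n - xstar n) := by
    simpa only [hp] using
      sum_deriv_mul_sub_nonneg_of_isMinOn hPconv hxstar hmin (fun n => hdiff n _) hxt
  calc _ = ∑ n ∈ univ.erase n₀, (b n (xstar n) - b n (xt n)) +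
        (c n₀ (xstar n₀) - c n₀ (xt n₀)) := by rw [sum_sub_distrib]; ring
    _ ≤ ∑ n ∈ univ.erase n₀, p n * (xstar n - xt n) + p n₀ * (xstar n₀ - xt n₀) :=
        add_le_add (sum_le_sum fun n _ => hbid n) hcost
    _ = -∑ n, p n * (xt n - xstar n) := by
        rw [sum_erase_add _ _ (mem_univ n₀), ← sum_neg_distrib]
        exact sum_congr rfl fun n _ => by ring
    _ ≤ 0 := neg_nonpos.mpr hfoc

/-- PNSP deviation inequality: under the truthful-at-the-margin bid profile, the payoff
change of any generator from any alternative dispatch is nonpositive. -/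
theorem pnsp_deviation_inequality
    {N : ℕ} (P : Set (Fin N → ℝ)) (hPne : P.Nonempty) (hPconv : Convex ℝ P)
    (hPnonneg : ∀ x ∈ P, ∀ n, 0 ≤ x n)
    (c : Fin N → ℝ → ℝ)
    (hconv : ∀ n, ConvexOn ℝ (Set.Ici 0) (c n))
    (hdiff : ∀ n, Differentiable ℝ (c n))
    (hc0 : ∀ n, c n 0 = 0)
    (xstar : Fin N → ℝ) (hxstar : xstar ∈ P)
    (hmin : ∀ x ∈ P, ∑ n, c n (xstar n) ≤ ∑ n, c n (x n))
    (p s q : Fin N → ℝ)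
    (hp : ∀ n, p n = deriv (c n) (xstar n))
    (hs : ∀ n, s n = xstar n)
    (hq : ∀ n, p n < q n)
    (b : Fin N → ℝ → ℝ)
    (hb : ∀ n x, b n x = if x ≤ s n then p n * x else q n * x + (p n - q n) * s n) :
    ∀ n₀ : Fin N, ∀ xt ∈ P,
      (∑ n ∈ Finset.univ.erase n₀, b n (xstar n)) -
        (∑ n ∈ Finset.univ.erase n₀, b n (xt n)) +
        c n₀ (xstar n₀) - c n₀ (xt n₀) ≤ 0 :=
  pnsp_deviation_inequality_general P hPconv hPnonneg c hconv hdiff xstar hxstar hmin p s q hp hs hq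
    b hb
end
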